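/- arXiv:2510.13496 — 3 statements merged into one kernel-verified Lean document; each statement's English description precedes it below -/
import Mathlib

section
/- Let f : 𝒳 → 𝒴 be continuous on a compact metric space 𝒳, let t > 0 be fixed, and let X_N = {x_1, …, x_N} be an r/2-net of 𝒳 with 0 < r ≤ t. Then 0 ≤ ω(f,t) − ω_N(f,t) ≤ ω(f,t) − ω(f, t−r) + 2·ω(f,r). -/
open Metric

noncomputable def modulus {X Y : Type*} [MetricSpace X] [MetricSpace Y]
    (f : X → Y) (t : ℝ) : ℝ :=
  sSup {r : ℝ | ∃ x x' : X, dist x x' ≤ t ∧ r = dist (f x) (f x')}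

noncomputable def dmodulus {X Y : Type*} [MetricSpace X] [MetricSpace Y]
    (S : Set X) (f : X → Y) (t : ℝ) : ℝ :=
  sSup {r : ℝ | ∃ x ∈ S, ∃ x' ∈ S, dist x x' ≤ t ∧ r = dist (f x) (f x')}

/-- a covering with balls of radius `r/2`, `0 < r ≤ t`, implies an
error bound for the discrete modulus of continuity at `t`. -/
theorem covering_to_bound {X Y : Type*} [MetricSpace X] [MetricSpace Y]
    [CompactSpace X] (f : X → Y) (hf : Continuous f) (t r : ℝ)
    (ht : 0 < t) (hr : 0 < r) (hrt : r ≤ t)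
    (S : Set X) (hSfin : S.Finite)
    (hnet : ∀ x : X, ∃ x' ∈ S, dist x x' ≤ r / 2) :
    0 ≤ modulus f t - dmodulus S f t ∧
      modulus f t - dmodulus S f t ≤
        modulus f t - modulus f (t - r) + 2 * modulus f r := by
  obtain ⟨C, hC⟩ := Metric.isBounded_iff.mp (isCompact_range hf).isBounded
  have hbdd : ∀ s : ℝ, BddAbove {u : ℝ | ∃ x x' : X, dist x x' ≤ s ∧ u = dist (f x) (f x')} := by
    intro s
    exact ⟨C, by rintro u ⟨x, x', -, rfl⟩; exact hC (Set.mem_range_self x) (Set.mem_range_self x')⟩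
  have hbddd : BddAbove {u : ℝ | ∃ x ∈ S, ∃ x' ∈ S, dist x x' ≤ t ∧ u = dist (f x) (f x')} :=
    ⟨C, by rintro u ⟨x, -, x', -, -, rfl⟩; exact hC (Set.mem_range_self x) (Set.mem_range_self x')⟩
  cases isEmpty_or_nonempty X with
  | inl h =>
    have e1 : ∀ s : ℝ, modulus f s = 0 := by
      intro s
      have : {u : ℝ | ∃ x x' : X, dist x x' ≤ s ∧ u = dist (f x) (f x')} = ∅ := by
        ext u; simp only [Set.mem_setOf_eq, Set.mem_empty_iff_false, iff_false]
        rintro ⟨x, -⟩; exact h.elim x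
      simp [modulus, this, Real.sSup_empty]
    have e2 : dmodulus S f t = 0 := by
      have : {u : ℝ | ∃ x ∈ S, ∃ x' ∈ S, dist x x' ≤ t ∧ u = dist (f x) (f x')} = ∅ := by
        ext u; simp only [Set.mem_setOf_eq, Set.mem_empty_iff_false, iff_false]
        rintro ⟨x, -⟩; exact h.elim x
      simp [dmodulus, this, Real.sSup_empty]
    simp [e1, e2]
  | inr h =>
    obtain ⟨x₀⟩ := h
    obtain ⟨s₀, hs₀S, -⟩ := hnet x₀
    have hdmne : (0:ℝ) ∈ {u : ℝ | ∃ x ∈ S, ∃ x' ∈ S, dist x x' ≤ t ∧ u = dist (f x) (f x')} :=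
      ⟨s₀, hs₀S, s₀, hs₀S, by simp [ht.le], by simp⟩
    have hdm_le : dmodulus S f t ≤ modulus f t := by
      apply csSup_le_csSup (hbdd t) ⟨0, hdmne⟩
      rintro u ⟨x, -, x', -, hd, rfl⟩
      exact ⟨x, x', hd, rfl⟩
    have hmodr_nonneg : 0 ≤ modulus f r :=
      le_csSup (hbdd r) ⟨x₀, x₀, by simp [hr.le], by simp⟩
    have hdm_nonneg : 0 ≤ dmodulus S f t := le_csSup hbddd hdmne
    have key : modulus f (t - r) ≤ dmodulus S f t + 2 * modulus f r := by
      apply Real.sSup_le _ (by linarith)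
      rintro u ⟨x, x', hd, rfl⟩
      obtain ⟨s, hsS, hxs⟩ := hnet x
      obtain ⟨s', hs'S, hx's'⟩ := hnet x'
      have h1 : dist (f x) (f s) ≤ modulus f r :=
        le_csSup (hbdd r) ⟨x, s, by linarith, rfl⟩
      have h2 : dist (f x') (f s') ≤ modulus f r :=
        le_csSup (hbdd r) ⟨x', s', by linarith, rfl⟩
      have h3 : dist (f s) (f s') ≤ dmodulus S f t := by
        apply le_csSup hbddd
        refine ⟨s, hsS, s', hs'S, ?_, rfl⟩
        have := dist_triangle4 s x x' s'
        have hsx : dist s x ≤ r / 2 := by rw [dist_comm]; exact hxs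
        linarith
      have h4 := dist_triangle4 (f x) (f s) (f s') (f x')
      have h5 : dist (f s') (f x') = dist (f x') (f s') := dist_comm _ _
      linarith
    exact ⟨by linarith, by linarith⟩
end

section
/- Let f : 𝒳 → 𝒴 be continuous on a compact metric space, [a,b] ⊆ (0, diam(𝒳)], and let X_{N_r} be an r/2-net with 0 < r ≤ a. Then for p ∈ [1, ∞), ‖ω(f,·) − ω_{N_r}(f,·)‖_{L^p(a,b)} ≤ 2^{(p−1)/p} ‖ω(f,·) − ω(f,·−r)‖_{L^p(a,b)} + 2 (b−a)^{1/p} ω(f,r). -/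
open Metric MeasureTheory

lemma minkowski_aux (μ : Measure ℝ) [IsFiniteMeasure μ] (G A : ℝ → ℝ) (C p : ℝ)
    (hp : 1 ≤ p) (hAm : Measurable A)
    (hG0 : ∀ t, 0 ≤ G t) (hA0 : ∀ t, 0 ≤ A t) (hC : 0 ≤ C)
    (hle : ∀ᵐ t ∂μ, G t ≤ A t + C)
    (hGint : Integrable (fun t => G t ^ p) μ)
    (hAint : Integrable (fun t => A t ^ p) μ) :
    (∫ t, G t ^ p ∂μ) ^ (1 / p) ≤
      (∫ t, A t ^ p ∂μ) ^ (1 / p) + (μ Set.univ).toReal ^ (1 / p) * C := by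
  have hp0 : 0 < p := lt_of_lt_of_le one_pos hp
  have hp0' : (0:ℝ) ≤ 1 / p := by positivity
  have keyG : ENNReal.ofReal ((∫ t, G t ^ p ∂μ) ^ (1 / p)) =
      (∫⁻ t, (ENNReal.ofReal (G t)) ^ p ∂μ) ^ (1 / p) := by
    rw [← ENNReal.ofReal_rpow_of_nonneg
        (integral_nonneg fun t => Real.rpow_nonneg (hG0 t) p) hp0',
      ofReal_integral_eq_lintegral_ofReal hGint
        (ae_of_all _ fun t => Real.rpow_nonneg (hG0 t) p)]
    congr 1
    exact lintegral_congr fun t => (ENNReal.ofReal_rpow_of_nonneg (hG0 t) hp0.le).symm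
  have keyA : ENNReal.ofReal ((∫ t, A t ^ p ∂μ) ^ (1 / p)) =
      (∫⁻ t, (ENNReal.ofReal (A t)) ^ p ∂μ) ^ (1 / p) := by
    rw [← ENNReal.ofReal_rpow_of_nonneg
        (integral_nonneg fun t => Real.rpow_nonneg (hA0 t) p) hp0',
      ofReal_integral_eq_lintegral_ofReal hAint
        (ae_of_all _ fun t => Real.rpow_nonneg (hA0 t) p)]
    congr 1
    exact lintegral_congr fun t => (ENNReal.ofReal_rpow_of_nonneg (hA0 t) hp0.le).symm
  have step1 : (∫⁻ t, (ENNReal.ofReal (G t)) ^ p ∂μ) ≤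
      ∫⁻ t, (ENNReal.ofReal (A t) + ENNReal.ofReal C) ^ p ∂μ := by
    refine lintegral_mono_ae (hle.mono fun t ht => ?_)
    refine ENNReal.rpow_le_rpow ?_ hp0.le
    rw [← ENNReal.ofReal_add (hA0 t) hC]
    exact ENNReal.ofReal_le_ofReal ht
  have step2 := ENNReal.lintegral_Lp_add_le
      (f := fun t => ENNReal.ofReal (A t)) (g := fun _ => ENNReal.ofReal C) (μ := μ)
      hAm.ennreal_ofReal.aemeasurable aemeasurable_const hp
  have constterm : ((∫⁻ _ : ℝ, (ENNReal.ofReal C) ^ p ∂μ)) ^ (1/p)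
      = ENNReal.ofReal C * (μ Set.univ) ^ (1/p) := by
    rw [lintegral_const, ENNReal.mul_rpow_of_nonneg _ _ hp0', ← ENNReal.rpow_mul,
      mul_one_div, div_self hp0.ne', ENNReal.rpow_one]
  have muconv : (μ Set.univ) ^ (1/p) = ENNReal.ofReal ((μ Set.univ).toReal ^ (1/p)) := by
    rw [← ENNReal.ofReal_rpow_of_nonneg ENNReal.toReal_nonneg hp0',
      ENNReal.ofReal_toReal (measure_ne_top μ _)]
  have chain : ENNReal.ofReal ((∫ t, G t ^ p ∂μ) ^ (1 / p)) ≤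
      ENNReal.ofReal ((∫ t, A t ^ p ∂μ) ^ (1 / p) + (μ Set.univ).toReal ^ (1 / p) * C) := by
    rw [keyG, ENNReal.ofReal_add (Real.rpow_nonneg
        (integral_nonneg fun t => Real.rpow_nonneg (hA0 t) p) _)
        (mul_nonneg (Real.rpow_nonneg ENNReal.toReal_nonneg _) hC),
      keyA, ENNReal.ofReal_mul (Real.rpow_nonneg ENNReal.toReal_nonneg _)]
    calc (∫⁻ t, (ENNReal.ofReal (G t)) ^ p ∂μ) ^ (1/p)
        ≤ (∫⁻ t, (ENNReal.ofReal (A t) + ENNReal.ofReal C) ^ p ∂μ) ^ (1/p) :=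
          ENNReal.rpow_le_rpow step1 hp0'
      _ ≤ (∫⁻ t, (ENNReal.ofReal (A t)) ^ p ∂μ) ^ (1/p)
            + (∫⁻ _ : ℝ, (ENNReal.ofReal C) ^ p ∂μ) ^ (1/p) := step2
      _ = (∫⁻ t, (ENNReal.ofReal (A t)) ^ p ∂μ) ^ (1/p)
            + ENNReal.ofReal ((μ Set.univ).toReal ^ (1/p)) * ENNReal.ofReal C := by
          rw [constterm, muconv, mul_comm]
  have hrhs : 0 ≤ (∫ t, A t ^ p ∂μ) ^ (1 / p) + (μ Set.univ).toReal ^ (1 / p) * C := by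
    have h1 : (0:ℝ) ≤ (∫ t, A t ^ p ∂μ) ^ (1 / p) :=
      Real.rpow_nonneg (integral_nonneg fun t => Real.rpow_nonneg (hA0 t) p) _
    have h2 : (0:ℝ) ≤ (μ Set.univ).toReal ^ (1 / p) * C :=
      mul_nonneg (Real.rpow_nonneg ENNReal.toReal_nonneg _) hC
    linarith
  exact (ENNReal.ofReal_le_ofReal_iff hrhs).mp chain

section ModulusFacts

variable {X Y : Type*} [MetricSpace X] [MetricSpace Y] [CompactSpace X] (f : X → Y)

lemma modulus_bddAbove (hf : Continuous f) (t : ℝ) :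
    BddAbove {r : ℝ | ∃ x x' : X, dist x x' ≤ t ∧ r = dist (f x) (f x')} := by
  refine ⟨Metric.diam (Set.range f), ?_⟩
  rintro s ⟨x, x', -, rfl⟩
  exact Metric.dist_le_diam_of_mem (isCompact_range hf).isBounded ⟨x, rfl⟩ ⟨x', rfl⟩

lemma modulus_le_diam (hf : Continuous f) (t : ℝ) :
    modulus f t ≤ Metric.diam (Set.range f) := by
  refine Real.sSup_le ?_ Metric.diam_nonneg
  rintro s ⟨x, x', -, rfl⟩
  exact Metric.dist_le_diam_of_mem (isCompact_range hf).isBounded ⟨x, rfl⟩ ⟨x', rfl⟩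

lemma modulus_nonneg [Nonempty X] (hf : Continuous f) {t : ℝ} (ht : 0 ≤ t) :
    0 ≤ modulus f t := by
  obtain ⟨x⟩ := ‹Nonempty X›
  exact le_csSup (modulus_bddAbove f hf t) ⟨x, x, by simpa using ht, by simp⟩

lemma modulus_mono (hf : Continuous f) : Monotone (modulus f) := by
  intro t t' htt'
  unfold modulus
  by_cases h : {r : ℝ | ∃ x x' : X, dist x x' ≤ t ∧ r = dist (f x) (f x')}.Nonempty
  · refine csSup_le_csSup (modulus_bddAbove f hf t') h ?_
    rintro s ⟨x, x', hd, rfl⟩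
    exact ⟨x, x', hd.trans htt', rfl⟩
  · rw [Set.not_nonempty_iff_eq_empty.mp h, Real.sSup_empty]
    by_cases h' : {r : ℝ | ∃ x x' : X, dist x x' ≤ t' ∧ r = dist (f x) (f x')}.Nonempty
    · obtain ⟨s, x, x', hd, rfl⟩ := h'
      exact le_trans dist_nonneg (le_csSup (modulus_bddAbove f hf t') ⟨x, x', hd, rfl⟩)
    · rw [Set.not_nonempty_iff_eq_empty.mp h', Real.sSup_empty]

variable (S : Set X)

lemma dmodulus_subset (t : ℝ) :
    {r : ℝ | ∃ x ∈ S, ∃ x' ∈ S, dist x x' ≤ t ∧ r = dist (f x) (f x')} ⊆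
      {r : ℝ | ∃ x x' : X, dist x x' ≤ t ∧ r = dist (f x) (f x')} := by
  rintro s ⟨x, -, x', -, hd, rfl⟩
  exact ⟨x, x', hd, rfl⟩

lemma dmodulus_bddAbove (hf : Continuous f) (t : ℝ) :
    BddAbove {r : ℝ | ∃ x ∈ S, ∃ x' ∈ S, dist x x' ≤ t ∧ r = dist (f x) (f x')} :=
  (modulus_bddAbove f hf t).mono (dmodulus_subset f S t)

lemma dmodulus_nonneg (hf : Continuous f) {x0 : X} (hx0 : x0 ∈ S) {t : ℝ} (ht : 0 ≤ t) :
    0 ≤ dmodulus S f t :=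
  le_csSup (dmodulus_bddAbove f S hf t) ⟨x0, hx0, x0, hx0, by simpa using ht, by simp⟩

lemma dmodulus_le_modulus [Nonempty X] (hf : Continuous f) {t : ℝ} (ht : 0 ≤ t) :
    dmodulus S f t ≤ modulus f t := by
  refine Real.sSup_le ?_ (modulus_nonneg f hf ht)
  rintro s ⟨x, -, x', -, hd, rfl⟩
  exact le_csSup (modulus_bddAbove f hf t) ⟨x, x', hd, rfl⟩

lemma dmodulus_mono (hf : Continuous f) : Monotone (dmodulus S f) := by
  intro t t' htt'
  unfold dmodulus
  by_cases h : {r : ℝ | ∃ x ∈ S, ∃ x' ∈ S, dist x x' ≤ t ∧ r = dist (f x) (f x')}.Nonempty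
  · refine csSup_le_csSup (dmodulus_bddAbove f S hf t') h ?_
    rintro s ⟨x, hx, x', hx', hd, rfl⟩
    exact ⟨x, hx, x', hx', hd.trans htt', rfl⟩
  · rw [Set.not_nonempty_iff_eq_empty.mp h, Real.sSup_empty]
    by_cases h' : {r : ℝ | ∃ x ∈ S, ∃ x' ∈ S, dist x x' ≤ t' ∧ r = dist (f x) (f x')}.Nonempty
    · obtain ⟨s, x, hx, x', hx', hd, rfl⟩ := h'
      exact le_trans dist_nonneg
        (le_csSup (dmodulus_bddAbove f S hf t') ⟨x, hx, x', hx', hd, rfl⟩)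
    · rw [Set.not_nonempty_iff_eq_empty.mp h', Real.sSup_empty]

lemma modulus_shift_le [Nonempty X] (hf : Continuous f) {r : ℝ} (hr : 0 < r)
    (hnet : ∀ x : X, ∃ x' ∈ S, dist x x' ≤ r / 2) {t : ℝ} (ht : r ≤ t) :
    modulus f (t - r) ≤ dmodulus S f t + 2 * modulus f r := by
  have hx0 : ∃ x0, x0 ∈ S := by
    obtain ⟨x⟩ := ‹Nonempty X›
    obtain ⟨y, hy, -⟩ := hnet x
    exact ⟨y, hy⟩
  obtain ⟨x0, hx0⟩ := hx0
  refine Real.sSup_le ?_ ?_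
  · rintro s ⟨x, x', hd, rfl⟩
    obtain ⟨y, hy, hxy⟩ := hnet x
    obtain ⟨y', hy', hxy'⟩ := hnet x'
    have hyy' : dist y y' ≤ t := by
      have h4 : dist y y' ≤ dist y x + dist x x' + dist x' y' := dist_triangle4 y x x' y'
      have hyx : dist y x = dist x y := dist_comm y x
      linarith
    have h1 : dist (f y) (f y') ≤ dmodulus S f t :=
      le_csSup (dmodulus_bddAbove f S hf t) ⟨y, hy, y', hy', hyy', rfl⟩
    have h2 : dist (f x) (f y) ≤ modulus f r :=
      le_csSup (modulus_bddAbove f hf r) ⟨x, y, hxy.trans (by linarith), rfl⟩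
    have h3 : dist (f x') (f y') ≤ modulus f r :=
      le_csSup (modulus_bddAbove f hf r) ⟨x', y', hxy'.trans (by linarith), rfl⟩
    have h4 : dist (f x) (f x') ≤ dist (f x) (f y) + dist (f y) (f y') + dist (f y') (f x') :=
      dist_triangle4 _ _ _ _
    have h5 : dist (f y') (f x') = dist (f x') (f y') := dist_comm _ _
    linarith
  · have := dmodulus_nonneg f S hf hx0 (le_trans hr.le ht)
    have := modulus_nonneg f hf hr.le
    linarith

end ModulusFacts

/-- an `r/2`-net with `0 < r ≤ a` implies an `L^p(a,b)` error bound
for the discrete modulus of continuity, `p ∈ [1,∞)`. -/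
theorem covering_to_bound_Lp {X Y : Type*} [MetricSpace X] [MetricSpace Y]
    [CompactSpace X] (f : X → Y) (hf : Continuous f)
    (a b r p : ℝ) (ha : 0 < a) (hab : a ≤ b)
    (hb : b ≤ Metric.diam (Set.univ : Set X))
    (hr : 0 < r) (hra : r ≤ a) (hp : 1 ≤ p)
    (S : Set X) (hSfin : S.Finite)
    (hnet : ∀ x : X, ∃ x' ∈ S, dist x x' ≤ r / 2) :
    (∫ t in a..b, |modulus f t - dmodulus S f t| ^ p) ^ (1 / p) ≤
      2 ^ ((p - 1) / p) *
          (∫ t in a..b, |modulus f t - modulus f (t - r)| ^ p) ^ (1 / p) +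
        2 * (b - a) ^ (1 / p) * modulus f r := by
  have hp0 : 0 < p := lt_of_lt_of_le one_pos hp
  -- X is nonempty
  have hX : Nonempty X := by
    by_contra h
    rw [not_nonempty_iff] at h
    have : Metric.diam (Set.univ : Set X) = 0 := by
      rw [Set.univ_eq_empty_iff.mpr h, Metric.diam_empty]
    linarith
  obtain ⟨x0, hx0⟩ : ∃ x0, x0 ∈ S := by
    obtain ⟨x⟩ := hX
    obtain ⟨y, hy, -⟩ := hnet x
    exact ⟨y, hy⟩
  set D : ℝ := Metric.diam (Set.range f) with hD
  have hD0 : 0 ≤ D := Metric.diam_nonneg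
  set G : ℝ → ℝ := fun t => |modulus f t - dmodulus S f t| with hG
  set A : ℝ → ℝ := fun t => |modulus f t - modulus f (t - r)| with hA
  set μ : Measure ℝ := volume.restrict (Set.Ioc a b) with hμ
  have hfin : IsFiniteMeasure μ := by
    constructor
    rw [hμ, Measure.restrict_apply_univ, Real.volume_Ioc]
    exact ENNReal.ofReal_lt_top
  -- measurability
  have hmodm : Measurable (modulus f) := (modulus_mono f hf).measurable
  have hdm : Measurable (dmodulus S f) := (dmodulus_mono f S hf).measurable
  have hshiftm : Measurable (fun t => modulus f (t - r)) :=
    hmodm.comp (measurable_id.sub_const r)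
  have hGm : Measurable G := (hmodm.sub hdm).abs
  have hAm : Measurable A := (hmodm.sub hshiftm).abs
  have hG0 : ∀ t, 0 ≤ G t := fun t => abs_nonneg _
  have hA0 : ∀ t, 0 ≤ A t := fun t => abs_nonneg _
  -- bounds on Ioc a b
  have hboundG : ∀ t ∈ Set.Ioc a b, G t ≤ D := by
    intro t ht
    have ht0 : (0:ℝ) ≤ t := le_of_lt (lt_of_le_of_lt ha.le ht.1)
    have h1 : dmodulus S f t ≤ modulus f t := dmodulus_le_modulus f S hf ht0
    have h2 : 0 ≤ dmodulus S f t := dmodulus_nonneg f S hf hx0 ht0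
    have h3 : modulus f t ≤ D := modulus_le_diam f hf t
    have hGt : G t = modulus f t - dmodulus S f t := abs_of_nonneg (by linarith)
    rw [hGt]; linarith
  have hboundA : ∀ t ∈ Set.Ioc a b, A t ≤ D := by
    intro t ht
    have htr : (0:ℝ) ≤ t - r := by
      have := ht.1; linarith
    have h1 : modulus f (t - r) ≤ modulus f t := modulus_mono f hf (by linarith)
    have h2 : 0 ≤ modulus f (t - r) := modulus_nonneg f hf htr
    have h3 : modulus f t ≤ D := modulus_le_diam f hf t
    have hAt : A t = modulus f t - modulus f (t - r) := abs_of_nonneg (by linarith)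
    rw [hAt]; linarith
  -- integrability
  have hintegrable : ∀ (g : ℝ → ℝ), Measurable g → (∀ t, 0 ≤ g t) →
      (∀ t ∈ Set.Ioc a b, g t ≤ D) → Integrable (fun t => g t ^ p) μ := by
    intro g hgm hg0 hgD
    refine ⟨((Real.continuous_rpow_const hp0.le).measurable.comp hgm).aestronglyMeasurable, ?_⟩
    refine HasFiniteIntegral.of_bounded (C := D ^ p) ?_
    rw [hμ]
    refine (ae_restrict_iff' measurableSet_Ioc).mpr (ae_of_all _ fun t ht => ?_)
    rw [Real.norm_eq_abs, abs_of_nonneg (Real.rpow_nonneg (hg0 t) p)]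
    exact Real.rpow_le_rpow (hg0 t) (hgD t ht) hp0.le
  have hGint : Integrable (fun t => G t ^ p) μ := hintegrable G hGm hG0 hboundG
  have hAint : Integrable (fun t => A t ^ p) μ := hintegrable A hAm hA0 hboundA
  -- pointwise inequality a.e.
  set C : ℝ := 2 * modulus f r with hC
  have hC0 : 0 ≤ C := mul_nonneg (by norm_num) (modulus_nonneg f hf hr.le)
  have hle : ∀ᵐ t ∂μ, G t ≤ A t + C := by
    rw [hμ]
    refine (ae_restrict_iff' measurableSet_Ioc).mpr (ae_of_all _ fun t ht => ?_)
    have ht0 : (0:ℝ) ≤ t := le_of_lt (lt_of_le_of_lt ha.le ht.1)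
    have hrt : r ≤ t := le_of_lt (lt_of_le_of_lt hra ht.1)
    have h1 : dmodulus S f t ≤ modulus f t := dmodulus_le_modulus f S hf ht0
    have h2 : modulus f (t - r) ≤ modulus f t := modulus_mono f hf (by linarith)
    have hkey : modulus f (t - r) ≤ dmodulus S f t + 2 * modulus f r :=
      modulus_shift_le f S hf hr hnet hrt
    have hGt : G t = modulus f t - dmodulus S f t := abs_of_nonneg (by linarith)
    have hAt : A t = modulus f t - modulus f (t - r) := abs_of_nonneg (by linarith)
    rw [hGt, hAt, hC]
    linarith
  -- apply Minkowski
  have hmink := minkowski_aux μ G A C p hp hAm hG0 hA0 hC0 hle hGint hAint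
  have hμuniv : (μ Set.univ).toReal = b - a := by
    rw [hμ, Measure.restrict_apply_univ, Real.volume_Ioc, ENNReal.toReal_ofReal (by linarith)]
  rw [hμuniv] at hmink
  -- rewrite interval integrals
  rw [intervalIntegral.integral_of_le hab, intervalIntegral.integral_of_le hab]
  have hIA : (0:ℝ) ≤ (∫ t, A t ^ p ∂μ) ^ (1/p) :=
    Real.rpow_nonneg (integral_nonneg fun t => Real.rpow_nonneg (hA0 t) p) _
  have h2e : (1:ℝ) ≤ 2 ^ ((p - 1) / p) := by
    calc (1:ℝ) = 2 ^ (0:ℝ) := by rw [Real.rpow_zero]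
      _ ≤ 2 ^ ((p - 1) / p) :=
        Real.rpow_le_rpow_of_exponent_le one_le_two (div_nonneg (by linarith) hp0.le)
  calc (∫ t in Set.Ioc a b, G t ^ p) ^ (1/p)
      ≤ (∫ t, A t ^ p ∂μ) ^ (1/p) + (b - a) ^ (1/p) * C := hmink
    _ ≤ 2 ^ ((p - 1) / p) * (∫ t, A t ^ p ∂μ) ^ (1/p) + 2 * (b - a) ^ (1/p) * modulus f r := by
        have := le_mul_of_one_le_left hIA h2e
        rw [hC]
        have hba : (0:ℝ) ≤ (b - a) ^ (1/p) := Real.rpow_nonneg (by linarith) _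
        nlinarith
    _ = 2 ^ ((p - 1) / p) * (∫ t in Set.Ioc a b, A t ^ p) ^ (1/p)
          + 2 * (b - a) ^ (1/p) * modulus f r := rfl
end

section
/- Let 𝒳 be a compact metric space with a nondegenerate Borel probability measure ℙ, and let x_1, …, x_N be i.i.d. samples from ℙ. Then for every r > 0, the probability that the balls B_r(x_n), n = 1,…,N, cover 𝒳 is at least 1 − 𝒩(𝒳, r/2) · η(r/2)^N, where η(ρ) := sup_{x ∈ 𝒳} (1 − ℙ(B_ρ(x))) < 1 and 𝒩(𝒳, ε) is the covering number of 𝒳 at scale ε. -/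
/-!
Fix a minimal `r/2`-net `K` of `𝒳`. If the samples miss no closed ball `B_{r/2}(y)`, `y ∈ K`, then
by the triangle inequality the balls `B_r(x_n)` cover `𝒳`. By independence, a fixed ball
`B_{r/2}(y)` is missed by all `N` samples with probability `(1 - ℙ(B_{r/2}(y)))^N ≤ η(r/2)^N`, and a
union bound over `K` gives the estimate. Finally `η(r/2) < 1` because, by compactness, the balls of
radius `r/2` have measure bounded below by the least measure of the finitely many balls of radius
`r/4` centred at an `r/4`-net.
-/

open Metric MeasureTheory ProbabilityTheory

/-- Covering number of a metric space at scale `ε` (centers anywhere). -/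
noncomputable def coveringNumber (X : Type*) [MetricSpace X] (ε : ℝ) : ℕ :=
  sInf {n : ℕ | ∃ K : Finset X, K.card = n ∧
    ∀ x : X, ∃ y ∈ K, dist x y ≤ ε}

/-- `η(ρ) = sup_x (1 - P(B_ρ(x)))`. -/
noncomputable def etaFn {X : Type*} [MetricSpace X] [MeasurableSpace X]
    (P : Measure X) (ρ : ℝ) : ℝ :=
  sSup {e : ℝ | ∃ x : X, e = 1 - (P (Metric.closedBall x ρ)).toReal}

open scoped ENNReal

-- `_root_` because `open Metric` also brings Mathlib's `Metric.coveringNumber` into scope.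
theorem exists_finset_card_eq_coveringNumber (X : Type*) [MetricSpace X] [CompactSpace X]
    {ε : ℝ} (hε : 0 < ε) :
    ∃ K : Finset X, K.card = _root_.coveringNumber X ε ∧ ∀ x : X, ∃ y ∈ K, dist x y ≤ ε := by
  obtain ⟨t, -, ht, hcover⟩ := finite_cover_balls_of_compact (isCompact_univ (X := X)) hε
  have hnet : ∀ x : X, ∃ y ∈ ht.toFinset, dist x y ≤ ε := fun x => by
    obtain ⟨y, hy, hxy⟩ := Set.mem_iUnion₂.1 (hcover (Set.mem_univ x))
    exact ⟨y, ht.mem_toFinset.2 hy, (mem_ball.1 hxy).le⟩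
  exact Nat.sInf_mem (s := {n | ∃ K : Finset X, K.card = n ∧ ∀ x : X, ∃ y ∈ K, dist x y ≤ ε})
    ⟨_, ht.toFinset, rfl, hnet⟩

theorem exists_dist_le_add_of_forall_exists_dist_le {X ι : Type*} [PseudoMetricSpace X]
    {K : Set X} {z : ι → X} {ε δ : ℝ} (hK : ∀ x, ∃ y ∈ K, dist x y ≤ ε)
    (hz : ∀ y ∈ K, ∃ i, dist (z i) y ≤ δ) (x : X) : ∃ i, dist x (z i) ≤ ε + δ := by
  obtain ⟨y, hyK, hxy⟩ := hK x
  obtain ⟨i, hzy⟩ := hz y hyK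
  exact ⟨i, (dist_triangle_right x (z i) y).trans (add_le_add hxy hzy)⟩

theorem exists_pos_forall_le_measure_ball {X : Type*} [PseudoMetricSpace X] [CompactSpace X]
    [MeasurableSpace X] (P : Measure X) [P.IsOpenPosMeasure] {ρ : ℝ} (hρ : 0 < ρ) :
    ∃ c : ℝ≥0∞, 0 < c ∧ ∀ x, c ≤ P (ball x ρ) := by
  obtain ⟨t, -, ht, hcover⟩ :=
    finite_cover_balls_of_compact (isCompact_univ (X := X)) (half_pos hρ)
  refine ⟨ht.toFinset.inf fun y => P (ball y (ρ / 2)), ?_, fun x => ?_⟩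
  · exact Finset.lt_inf_iff ENNReal.zero_lt_top |>.2 fun y _ => measure_ball_pos P y (half_pos hρ)
  · obtain ⟨y, hy, hxy⟩ := Set.mem_iUnion₂.1 (hcover (Set.mem_univ x))
    have hball : ball y (ρ / 2) ⊆ ball x ρ := by
      intro z hz
      rw [mem_ball] at hz hxy ⊢
      linarith [dist_triangle_right z x y]
    exact (Finset.inf_le (ht.mem_toFinset.2 hy)).trans (measure_mono hball)

section etaFn

variable {X : Type*} [MetricSpace X] [MeasurableSpace X]

theorem one_sub_measureReal_closedBall_le_etaFn (P : Measure X) (ρ : ℝ) (x : X) :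
    1 - P.real (closedBall x ρ) ≤ etaFn P ρ :=
  le_csSup ⟨1, by rintro _ ⟨y, rfl⟩; exact sub_le_self _ ENNReal.toReal_nonneg⟩ ⟨x, rfl⟩

theorem measureReal_compl_closedBall_le_etaFn [OpensMeasurableSpace X] (P : Measure X)
    [IsProbabilityMeasure P] (ρ : ℝ) (x : X) : P.real (closedBall x ρ)ᶜ ≤ etaFn P ρ := by
  rw [probReal_compl_eq_one_sub measurableSet_closedBall]
  exact one_sub_measureReal_closedBall_le_etaFn P ρ x

theorem etaFn_lt_one [CompactSpace X] (P : Measure X) [IsProbabilityMeasure P]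
    [P.IsOpenPosMeasure] {ρ : ℝ} (hρ : 0 < ρ) : etaFn P ρ < 1 := by
  obtain ⟨c, hc0, hc⟩ := exists_pos_forall_le_measure_ball P hρ
  have hc' : 0 < (min c 1).toReal :=
    ENNReal.toReal_pos (lt_min hc0 one_pos).ne' (min_lt_of_right_lt ENNReal.one_lt_top).ne
  have hle : ∀ x, (min c 1).toReal ≤ P.real (closedBall x ρ) := fun x =>
    ENNReal.toReal_mono (measure_ne_top _ _) <|
      (min_le_left _ _).trans <| (hc x).trans (measure_mono ball_subset_closedBall)
  have hle_one : (min c 1).toReal ≤ 1 := ENNReal.toReal_le_of_le_ofReal zero_le_one (by simp)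
  calc etaFn P ρ ≤ 1 - (min c 1).toReal :=
        Real.sSup_le (by rintro _ ⟨x, rfl⟩; exact sub_le_sub_left (hle x) 1) (by linarith)
    _ < 1 := by linarith

end etaFn

theorem one_sub_measureReal_le_of_compl_subset {Ω : Type*} [MeasurableSpace Ω] {μ : Measure Ω}
    [IsProbabilityMeasure μ] {s t : Set Ω} (h : sᶜ ⊆ t) : 1 - μ.real t ≤ μ.real s := by
  have : μ.real Set.univ ≤ μ.real s + μ.real t :=
    (measureReal_mono (by simpa [Set.compl_subset_iff_union] using h)).trans
      (measureReal_union_le s t)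
  rw [probReal_univ] at this
  linarith

theorem ProbabilityTheory.iIndepFun.measureReal_iInter_preimage_eq_pow {Ω X ι : Type*}
    [MeasurableSpace Ω] [MeasurableSpace X] [Fintype ι] {μ : Measure Ω} {P : Measure X} {ξ : ι → Ω → X}
    (hmeas : ∀ i, Measurable (ξ i)) (hindep : iIndepFun ξ μ) (hid : ∀ i, μ.map (ξ i) = P)
    {s : Set X} (hs : MeasurableSet s) :
    μ.real (⋂ i, ξ i ⁻¹' s) = P.real s ^ Fintype.card ι := by
  have hprod := hindep.measure_inter_preimage_eq_mul Finset.univ (sets := fun _ => s)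
    fun _ _ => hs
  simp only [Finset.mem_univ, Set.iInter_true] at hprod
  have hlaw : ∀ i, μ (ξ i ⁻¹' s) = P s := fun i => by
    rw [← hid i, Measure.map_apply (hmeas i) hs]
  simp only [measureReal_def, hprod, hlaw, Finset.prod_const, Finset.card_univ, ENNReal.toReal_pow]

/-- the probability that `N` i.i.d. samples from a nondegenerate
probability measure on a compact metric space give an `r`-cover is at least
`1 - 𝒩(𝒳, r/2) · η(r/2)^N`, with `η(r/2) < 1`. -/
theorem covering_probability {X : Type*} [MetricSpace X] [CompactSpace X]
    [MeasurableSpace X] [BorelSpace X]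
    (P : Measure X) [IsProbabilityMeasure P]
    (hnd : ∀ x : X, ∀ U : Set X, IsOpen U → x ∈ U → 0 < P U)
    {Ω : Type*} [MeasurableSpace Ω] (μ : Measure Ω) [IsProbabilityMeasure μ]
    (N : ℕ) (ξ : Fin N → Ω → X) (hmeas : ∀ i, Measurable (ξ i))
    (hindep : iIndepFun ξ μ)
    (hid : ∀ i, Measure.map (ξ i) μ = P)
    (r : ℝ) (hr : 0 < r) :
    etaFn P (r / 2) < 1 ∧
      1 - (coveringNumber X (r / 2) : ℝ) * etaFn P (r / 2) ^ N ≤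
        (μ {ω | ∀ y : X, ∃ i : Fin N, dist y (ξ i ω) ≤ r}).toReal := by
  have hρ : 0 < r / 2 := half_pos hr
  have : P.IsOpenPosMeasure := ⟨fun U hU ⟨x, hx⟩ => (hnd x U hU hx).ne'⟩
  refine ⟨etaFn_lt_one P hρ, ?_⟩
  obtain ⟨K, hKcard, hK⟩ := exists_finset_card_eq_coveringNumber X hρ
  set missed := ⋃ y ∈ K, ⋂ i, ξ i ⁻¹' (closedBall y (r / 2))ᶜ
  have hmissed : μ.real missed ≤ coveringNumber X (r / 2) * etaFn P (r / 2) ^ N := calc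
    μ.real missed ≤ ∑ y ∈ K, μ.real (⋂ i, ξ i ⁻¹' (closedBall y (r / 2))ᶜ) :=
        measureReal_biUnion_finset_le _ _
    _ = ∑ y ∈ K, P.real (closedBall y (r / 2))ᶜ ^ N := by
        simp only [hindep.measureReal_iInter_preimage_eq_pow hmeas hid
          measurableSet_closedBall.compl, Fintype.card_fin]
    _ ≤ ∑ _y ∈ K, etaFn P (r / 2) ^ N := Finset.sum_le_sum fun y _ =>
        pow_le_pow_left₀ measureReal_nonneg (measureReal_compl_closedBall_le_etaFn P _ y) N
    _ = coveringNumber X (r / 2) * etaFn P (r / 2) ^ N := by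
        rw [Finset.sum_const, hKcard, nsmul_eq_mul]
  have hcover : {ω | ∀ y : X, ∃ i : Fin N, dist y (ξ i ω) ≤ r}ᶜ ⊆ missed := by
    intro ω hω
    contrapose! hω
    simp only [missed, Set.mem_iUnion, Set.mem_iInter, Set.mem_preimage, Set.mem_compl_iff,
      mem_closedBall, not_exists, not_forall, not_not] at hω
    simpa [add_halves] using exists_dist_le_add_of_forall_exists_dist_le hK hω
  exact (sub_le_sub_left hmissed 1).trans (one_sub_measureReal_le_of_compl_subset hcover)
end
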